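/- Let K be a real n×n positive semidefinite matrix with positive semidefinite square root K^{1/2}, let P be a real n×m matrix, let r ≤ m, and set C = KP and W = PᵀKP; assume W is invertible. Let K^{1/2}P = F S Nᵀ be a singular value decomposition with F n×m having orthonormal columns, N m×m orthogonal, and S m×m diagonal with positive diagonal entries. Then there exists a real n×r matrix H with orthonormal columns (HᵀH = I_r) such that G := K^{1/2} H Hᵀ K^{1/2} is a best rank-r approximation of CW⁻¹Cᵀ in the Frobenius norm (i.e. ‖CW⁻¹Cᵀ − G‖_F ≤ ‖CW⁻¹Cᵀ − G′‖_F for every n×n matrix G′ with rank ≤ r); moreover K − G is positive semidefinite and trace(K − G) equals the minimum of ‖K^{1/2} − FT‖_F² over all real m×n matrices T with rank(T) ≤ r. -/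

import Mathlib

/-!
With `A = K^{1/2}` and the singular value decomposition `A P = F S Nᵀ`, the Nyström matrix is
`C W⁻¹ Cᵀ = A F Fᵀ A = B Bᵀ` for `B = A F`. Diagonalise `Bᵀ B = V diag ν Vᵀ` and let `Vᵣ` collect
the eigenvectors of the `r` largest `ν i`; the matrix `H = F Vᵣ` does the job.

Both optimality claims rest on Ky Fan's maximum principle: if `Q` is an orthogonal projection of
rank at most `r`, then `tr (Q M)` is at most the sum of the `r` largest eigenvalues of `M`. For a
matrix `T` of rank at most `r` and `Q` the projection onto its column space, Pythagoras gives
`‖X - T‖² ≥ ‖X‖² - ‖Q X‖² = ‖X‖² - tr (Q X Xᵀ)`. The Frobenius claim applies this to `X = B Bᵀ`,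
where `X Xᵀ = R Rᵀ` for `R = B V diag √ν` with `Rᵀ R = diag ν²`; the trace claim applies it to
`X = Fᵀ A`, after splitting off the component of `A` orthogonal to the range of `F`.
-/

open Matrix

/-- Frobenius norm of a real matrix: ‖A‖_F = sqrt(trace(Aᵀ A)). -/
noncomputable def frobNorm {α β : Type*} [Fintype α] [Fintype β] (A : Matrix α β ℝ) : ℝ :=
  Real.sqrt (Matrix.trace (Aᵀ * A))

/-- The positive semidefinite square root, as defined in the older Mathlib (removed since). -/
noncomputable def Matrix.PosSemidef.sqrt {n : Type*} [Fintype n] [DecidableEq n] {𝕜 : Type*} [RCLike 𝕜]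
    [PartialOrder 𝕜] [StarOrderedRing 𝕜] {A : Matrix n n 𝕜} (hA : A.PosSemidef) : Matrix n n 𝕜 :=
  hA.1.eigenvectorUnitary.1 * diagonal ((↑) ∘ (√·) ∘ hA.1.eigenvalues) *
    (star hA.1.eigenvectorUnitary : Matrix n n 𝕜)

namespace Matrix

variable {α β ι : Type*} [Fintype α] [Fintype β] [Fintype ι]

theorem posSemidef_transpose_mul_self (X : Matrix α β ℝ) : (Xᵀ * X).PosSemidef := by
  simpa [conjTranspose_eq_transpose_of_trivial] using posSemidef_conjTranspose_mul_self X

theorem PosSemidef.transpose_mul_mul_same {M : Matrix α α ℝ} (hM : M.PosSemidef)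
    (X : Matrix α β ℝ) : (Xᵀ * M * X).PosSemidef := by
  simpa [conjTranspose_eq_transpose_of_trivial] using hM.conjTranspose_mul_mul_same X

theorem trace_transpose_mul_self_nonneg (X : Matrix α β ℝ) : 0 ≤ trace (Xᵀ * X) :=
  (posSemidef_transpose_mul_self X).trace_nonneg

theorem trace_transpose_mul_comm (X Y : Matrix α β ℝ) : trace (Xᵀ * Y) = trace (Yᵀ * X) := by
  rw [← trace_transpose (Yᵀ * X), transpose_mul, transpose_transpose]

theorem trace_sub_transpose_mul_sub (X Y : Matrix α β ℝ) :
    trace ((X - Y)ᵀ * (X - Y)) = trace (Xᵀ * X) - 2 * trace (Xᵀ * Y) + trace (Yᵀ * Y) := by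
  rw [transpose_sub, Matrix.sub_mul, Matrix.mul_sub, Matrix.mul_sub, trace_sub, trace_sub,
    trace_sub, trace_transpose_mul_comm Y X]
  ring

theorem frobNorm_sq (X : Matrix α β ℝ) : frobNorm X ^ 2 = trace (Xᵀ * X) :=
  Real.sq_sqrt (trace_transpose_mul_self_nonneg X)

theorem trace_transpose_mul_proj_mul (U : Matrix α ι ℝ) (X : Matrix α β ℝ) :
    trace (Xᵀ * (U * Uᵀ * X)) = trace (Uᵀ * (X * Xᵀ) * U) := by
  rw [trace_mul_comm, trace_mul_cycle Uᵀ]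
  simp only [Matrix.mul_assoc]

section Projection

variable [DecidableEq ι] {U : Matrix α ι ℝ}

theorem mul_transpose_idempotent (hU : Uᵀ * U = 1) : U * Uᵀ * (U * Uᵀ) = U * Uᵀ := by
  rw [Matrix.mul_assoc, ← Matrix.mul_assoc Uᵀ, hU, Matrix.one_mul]

theorem posSemidef_one_sub_mul_transpose [DecidableEq α] (hU : Uᵀ * U = 1) :
    (1 - U * Uᵀ).PosSemidef := by
  have hsq : (1 - U * Uᵀ)ᵀ * (1 - U * Uᵀ) = 1 - U * Uᵀ := by
    simp only [transpose_sub, transpose_one, transpose_mul, transpose_transpose, sub_mul, mul_sub,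
      Matrix.one_mul, Matrix.mul_one, mul_transpose_idempotent hU]
    abel
  exact hsq ▸ posSemidef_transpose_mul_self _

theorem trace_proj_mul_transpose_mul_self (hU : Uᵀ * U = 1) (X : Matrix α β ℝ) :
    trace ((U * Uᵀ * X)ᵀ * (U * Uᵀ * X)) = trace (Uᵀ * (X * Xᵀ) * U) := by
  rw [transpose_mul, transpose_mul, transpose_transpose, Matrix.mul_assoc,
    ← Matrix.mul_assoc (U * Uᵀ), mul_transpose_idempotent hU, trace_transpose_mul_proj_mul]

end Projection

theorem trace_conj_diagonal_transpose_mul_self [DecidableEq β] {J : Matrix α β ℝ} {ν : β → ℝ}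
    (hJ : Jᵀ * J = diagonal ν) (d : β → ℝ) :
    trace ((J * diagonal d * Jᵀ)ᵀ * (J * diagonal d * Jᵀ)) = ∑ i, (d i * ν i) ^ 2 := by
  have hsymm : (J * diagonal d * Jᵀ)ᵀ = J * diagonal d * Jᵀ := by
    rw [transpose_mul, transpose_mul, transpose_transpose, diagonal_transpose, Matrix.mul_assoc]
  rw [hsymm, show J * diagonal d * Jᵀ * (J * diagonal d * Jᵀ) =
      J * (diagonal d * (Jᵀ * J) * diagonal d) * Jᵀ by simp only [Matrix.mul_assoc],
    trace_mul_cycle, hJ]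
  simp only [diagonal_mul_diagonal, trace_diagonal]
  exact Finset.sum_congr rfl fun i _ => by ring

theorem IsHermitian.exists_orthogonal_diagonal [DecidableEq α] {M : Matrix α α ℝ}
    (hM : M.IsHermitian) :
    ∃ V : Matrix α α ℝ, Vᵀ * V = 1 ∧ V * Vᵀ = 1 ∧ M = V * diagonal hM.eigenvalues * Vᵀ := by
  have hV := Unitary.mem_iff.mp hM.eigenvectorUnitary.2
  have hM' := hM.spectral_theorem
  simp only [star_eq_conjTranspose, conjTranspose_eq_transpose_of_trivial] at hV
  rw [Unitary.conjStarAlgAut_apply, star_eq_conjTranspose, conjTranspose_eq_transpose_of_trivial,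
    RCLike.ofReal_real_eq_id, Function.id_comp] at hM'
  exact ⟨_, hV.1, hV.2, hM'⟩

theorem PosSemidef.exists_orthogonal_diagonal [DecidableEq α] {M : Matrix α α ℝ}
    (hM : M.PosSemidef) : ∃ (ν : α → ℝ) (V : Matrix α α ℝ), (∀ i, 0 ≤ ν i) ∧ Vᵀ * V = 1 ∧
      V * Vᵀ = 1 ∧ M = V * diagonal ν * Vᵀ := by
  obtain ⟨V, hV⟩ := hM.1.exists_orthogonal_diagonal
  exact ⟨_, V, hM.eigenvalues_nonneg, hV⟩

theorem exists_orthonormal_mul_transpose_eq [DecidableEq β] {V : Matrix α β ℝ}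
    (hV : Vᵀ * V = 1) (S : Finset β) {k : ℕ} (hk : S.card = k) :
    ∃ U : Matrix α (Fin k) ℝ, Uᵀ * U = 1 ∧
      U * Uᵀ = V * diagonal (fun i => if i ∈ S then (1 : ℝ) else 0) * Vᵀ := by
  subst hk
  set f : Fin S.card → β := Subtype.val ∘ S.equivFin.symm
  have hf : Function.Injective f := Subtype.val_injective.comp S.equivFin.symm.injective
  refine ⟨V.submatrix id f, ?_, ?_⟩
  · rw [transpose_submatrix, ← submatrix_mul _ _ _ _ _ Function.bijective_id, hV,
      submatrix_one _ hf]
  · ext a b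
    simp only [transpose_submatrix, mul_apply, submatrix_apply, id_eq, transpose_apply,
      diagonal_apply, mul_ite, mul_one, mul_zero, Finset.sum_ite_eq', Finset.mem_univ, if_true,
      ite_mul, zero_mul, Finset.sum_ite_mem, Finset.univ_inter]
    rw [← Finset.sum_coe_sort S]
    exact S.equivFin.symm.sum_comp fun i => V a i * V b i

theorem exists_orthonormal_mul_transpose_mul_eq [DecidableEq α] (X : Matrix α β ℝ) :
    ∃ k ≤ X.rank, ∃ U : Matrix α (Fin k) ℝ, Uᵀ * U = 1 ∧ U * Uᵀ * X = X := by
  have hXX : (X * Xᵀ).IsHermitian := by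
    simpa using (posSemidef_transpose_mul_self Xᵀ).1
  obtain ⟨V, hV, -, hdiag⟩ := hXX.exists_orthogonal_diagonal
  -- `U` spans the range of `X Xᵀ`, which is the column space of `X`.
  set S := Finset.univ.filter fun i => hXX.eigenvalues i ≠ 0
  obtain ⟨U, hU, hUU⟩ := exists_orthonormal_mul_transpose_eq hV S rfl
  refine ⟨S.card, ?_, U, hU, ?_⟩
  · rw [← rank_self_mul_transpose, hXX.rank_eq_card_non_zero_eigs, Fintype.card_subtype]
  · have hfix : U * Uᵀ * (X * Xᵀ) = X * Xᵀ := by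
      have hsupp : (fun i => (if i ∈ S then (1 : ℝ) else 0) * hXX.eigenvalues i) =
          hXX.eigenvalues := by
        funext i
        by_cases hi : hXX.eigenvalues i = 0 <;> simp [S, hi]
      rw [hUU, hdiag]
      simp only [Matrix.mul_assoc]
      rw [← Matrix.mul_assoc Vᵀ V, hV, Matrix.one_mul, ← Matrix.mul_assoc (diagonal _),
        diagonal_mul_diagonal, hsupp]
    have hZ : ((1 - U * Uᵀ) * X) * ((1 - U * Uᵀ) * X)ᵀ = 0 := by
      rw [transpose_mul, Matrix.mul_assoc, ← Matrix.mul_assoc X, ← Matrix.mul_assoc,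
        Matrix.sub_mul, Matrix.one_mul, hfix, sub_self, Matrix.zero_mul]
    rw [← conjTranspose_eq_transpose_of_trivial ((1 - U * Uᵀ) * X), self_mul_conjTranspose_eq_zero,
      Matrix.sub_mul, Matrix.one_mul, sub_eq_zero] at hZ
    exact hZ.symm

theorem trace_sub_le_trace_sub_transpose_mul_sub [DecidableEq α] {r : ℕ} (X T : Matrix α β ℝ)
    (hT : T.rank ≤ r) {c : ℝ}
    (hc : ∀ k ≤ r, ∀ U : Matrix α (Fin k) ℝ, Uᵀ * U = 1 → trace (Uᵀ * (X * Xᵀ) * U) ≤ c) :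
    trace (Xᵀ * X) - c ≤ trace ((X - T)ᵀ * (X - T)) := by
  obtain ⟨k, hk, U, hU, hUT⟩ := exists_orthonormal_mul_transpose_mul_eq T
  have hcross : trace ((U * Uᵀ * X)ᵀ * T) = trace (Xᵀ * T) := by
    rw [transpose_mul, transpose_mul, transpose_transpose, Matrix.mul_assoc, hUT]
  have hgap := trace_transpose_mul_self_nonneg (U * Uᵀ * X - T)
  rw [trace_sub_transpose_mul_sub, hcross, trace_proj_mul_transpose_mul_self hU] at hgap
  rw [trace_sub_transpose_mul_sub]
  linarith [hc k (hk.trans hT) U hU]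

theorem mul_inv_gram_mul_transpose_of_svd [DecidableEq β] {F : Matrix α β ℝ}
    {N : Matrix β β ℝ} {s : β → ℝ} (hF : Fᵀ * F = 1) (hN : Nᵀ * N = 1) (hs : ∀ i, s i ≠ 0) :
    F * diagonal s * Nᵀ * ((F * diagonal s * Nᵀ)ᵀ * (F * diagonal s * Nᵀ))⁻¹ *
      (F * diagonal s * Nᵀ)ᵀ = F * Fᵀ := by
  have hgram : (F * diagonal s * Nᵀ)ᵀ * (F * diagonal s * Nᵀ) =
      N * diagonal (fun i => s i * s i) * Nᵀ := by
    simp only [transpose_mul, transpose_transpose, diagonal_transpose, Matrix.mul_assoc]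
    rw [← Matrix.mul_assoc Fᵀ F, hF, Matrix.one_mul, ← Matrix.mul_assoc (diagonal s),
      diagonal_mul_diagonal]
  have hinv : (N * diagonal (fun i => s i * s i) * Nᵀ)⁻¹ =
      N * diagonal (fun i => (s i * s i)⁻¹) * Nᵀ := by
    refine inv_eq_right_inv ?_
    rw [show N * diagonal (fun i => s i * s i) * Nᵀ * (N * diagonal (fun i => (s i * s i)⁻¹) * Nᵀ)
        = N * (diagonal (fun i => s i * s i) * (Nᵀ * N) * diagonal fun i => (s i * s i)⁻¹) * Nᵀ
        by simp only [Matrix.mul_assoc], hN, Matrix.mul_one, diagonal_mul_diagonal]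
    simp only [ne_eq, mul_self_eq_zero, hs, not_false_eq_true, mul_inv_cancel₀, diagonal_one,
      Matrix.mul_one, mul_eq_one_comm.mp hN]
  rw [hgram, hinv, show F * diagonal s * Nᵀ * (N * diagonal (fun i => (s i * s i)⁻¹) * Nᵀ) *
      (F * diagonal s * Nᵀ)ᵀ = F * (diagonal s * (Nᵀ * N) * diagonal (fun i => (s i * s i)⁻¹) *
        (Nᵀ * N) * diagonal s) * Fᵀ by
      simp only [transpose_mul, transpose_transpose, diagonal_transpose, Matrix.mul_assoc],
    hN, Matrix.mul_one, Matrix.mul_one, diagonal_mul_diagonal, diagonal_mul_diagonal]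
  have hcancel : (fun i => s i * (s i * s i)⁻¹ * s i) = fun _ => 1 :=
    funext fun i => by field_simp [hs i]
  rw [hcancel, diagonal_one, Matrix.mul_one]

end Matrix

namespace Matrix.PosSemidef

variable {α : Type*} [Fintype α] [DecidableEq α] {K : Matrix α α ℝ}

theorem sqrt_mul_self (hK : K.PosSemidef) : hK.sqrt * hK.sqrt = K := by
  have hV : (star hK.1.eigenvectorUnitary : Matrix α α ℝ) * hK.1.eigenvectorUnitary = 1 :=
    Unitary.coe_star_mul_self _
  have hK' := hK.1.spectral_theorem
  rw [Unitary.conjStarAlgAut_apply] at hK'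
  conv_rhs => rw [hK']
  simp only [PosSemidef.sqrt, Matrix.mul_assoc]
  rw [← Matrix.mul_assoc _ (hK.1.eigenvectorUnitary : Matrix α α ℝ), hV, Matrix.one_mul,
    ← Matrix.mul_assoc (diagonal _), diagonal_mul_diagonal]
  congr 3
  funext i
  simp [Real.mul_self_sqrt (hK.eigenvalues_nonneg i)]

theorem posSemidef_sqrt (hK : K.PosSemidef) : hK.sqrt.PosSemidef := by
  have hD : (diagonal ((↑) ∘ (√·) ∘ hK.1.eigenvalues : α → ℝ)).PosSemidef :=
    posSemidef_diagonal_iff.2 fun i => by simp [Real.sqrt_nonneg]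
  rw [PosSemidef.sqrt, star_eq_conjTranspose]
  exact hD.mul_mul_conjTranspose_same _

theorem transpose_sqrt (hK : K.PosSemidef) : hK.sqrtᵀ = hK.sqrt := by
  simpa [conjTranspose_eq_transpose_of_trivial] using hK.posSemidef_sqrt.1.eq

end Matrix.PosSemidef

def IsTopIndexSet {β : Type*} (μ : β → ℝ) (S : Finset β) : Prop :=
  ∀ i ∈ S, ∀ j ∉ S, μ j ≤ μ i

theorem exists_isTopIndexSet {β : Type*} [Fintype β] [DecidableEq β] (μ : β → ℝ) {r : ℕ}
    (hr : r ≤ Fintype.card β) : ∃ S : Finset β, S.card = r ∧ IsTopIndexSet μ S := by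
  induction r with
  | zero => exact ⟨∅, rfl, by simp [IsTopIndexSet]⟩
  | succ k ih =>
    obtain ⟨S, hcard, hS⟩ := ih (by omega)
    have hne : Sᶜ.Nonempty := by
      rw [← Finset.card_pos, Finset.card_compl, hcard]
      omega
    obtain ⟨j₀, hj₀, hmax⟩ := Finset.exists_mem_eq_sup' hne μ
    refine ⟨insert j₀ S, by rw [Finset.card_insert_of_notMem (by simpa using hj₀), hcard], ?_⟩
    intro i hi j hj
    have hjS : j ∉ S := fun h => hj (Finset.mem_insert_of_mem h)
    rcases Finset.mem_insert.1 hi with rfl | hiS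
    · exact hmax ▸ Finset.le_sup' μ (Finset.mem_compl.2 hjS)
    · exact hS i hiS j hjS

namespace IsTopIndexSet

theorem mul_self {β : Type*} {μ : β → ℝ} {S : Finset β} (hS : IsTopIndexSet μ S)
    (hμ : ∀ i, 0 ≤ μ i) : IsTopIndexSet (fun i => μ i * μ i) S :=
  fun i hi j hj => mul_self_le_mul_self (hμ j) (hS i hi j hj)

variable {β : Type*} [Fintype β] {μ : β → ℝ} {S : Finset β}

theorem exists_threshold (hS : IsTopIndexSet μ S) (hμ : ∀ i, 0 ≤ μ i) :
    ∃ c, 0 ≤ c ∧ (∀ i ∈ S, c ≤ μ i) ∧ ∀ j ∉ S, μ j ≤ c := by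
  rcases S.eq_empty_or_nonempty with rfl | hne
  · exact ⟨∑ i, μ i, Finset.sum_nonneg fun i _ => hμ i, by simp,
      fun j _ => Finset.single_le_sum (fun i _ => hμ i) (Finset.mem_univ j)⟩
  · obtain ⟨i₀, hi₀, hmin⟩ := Finset.exists_mem_eq_inf' hne μ
    exact ⟨μ i₀, hμ i₀, fun i hi => hmin ▸ Finset.inf'_le μ hi, fun j hj => hS i₀ hi₀ j hj⟩

variable [DecidableEq β] {α ι : Type*} [Fintype α] [Fintype ι] [DecidableEq ι]

theorem sum_mul_le (hS : IsTopIndexSet μ S) (hμ : ∀ i, 0 ≤ μ i) {t : β → ℝ}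
    (ht₀ : ∀ i, 0 ≤ t i) (ht₁ : ∀ i, t i ≤ 1) (hts : ∑ i, t i ≤ S.card) :
    ∑ i, μ i * t i ≤ ∑ i ∈ S, μ i := by
  obtain ⟨c, hc₀, hcS, hcSc⟩ := hS.exists_threshold hμ
  calc ∑ i, μ i * t i
      ≤ ∑ i, ((if i ∈ S then μ i else 0) + c * (t i - if i ∈ S then 1 else 0)) := by
        refine Finset.sum_le_sum fun i _ => ?_
        by_cases hi : i ∈ S
        · simp only [hi, if_true]
          nlinarith [hcS i hi, ht₁ i]
        · simp only [hi, if_false]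
          nlinarith [hcSc i hi, ht₀ i]
    _ = ∑ i ∈ S, μ i + c * (∑ i, t i - S.card) := by
        rw [Finset.sum_add_distrib, ← Finset.mul_sum, Finset.sum_sub_distrib]
        simp
    _ ≤ ∑ i ∈ S, μ i := by nlinarith

theorem trace_transpose_mul_diagonal_mul_le (hS : IsTopIndexSet μ S) (hμ : ∀ i, 0 ≤ μ i)
    {U : Matrix β ι ℝ} (hU : Uᵀ * U = 1) (hι : Fintype.card ι ≤ S.card) :
    trace (Uᵀ * diagonal μ * U) ≤ ∑ i ∈ S, μ i := by
  have htrace : trace (Uᵀ * diagonal μ * U) = ∑ i, μ i * (U * Uᵀ) i i := by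
    rw [trace_mul_cycle]
    simp only [trace, diag_apply, mul_diagonal, mul_comm]
  have hmass : ∑ i, (U * Uᵀ) i i = Fintype.card ι := by
    change trace (U * Uᵀ) = _
    rw [trace_mul_comm, hU, trace_one]
  refine htrace ▸ hS.sum_mul_le hμ (fun i => ?_) (fun i => ?_) (hmass ▸ by exact_mod_cast hι)
  · simpa using (posSemidef_transpose_mul_self Uᵀ).diag_nonneg (i := i)
  · simpa using (posSemidef_one_sub_mul_transpose hU).diag_nonneg (i := i)

theorem trace_transpose_mul_conj_diagonal_mul_le (hS : IsTopIndexSet μ S) (hμ : ∀ i, 0 ≤ μ i)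
    {V : Matrix β β ℝ} (hV : V * Vᵀ = 1) {U : Matrix β ι ℝ} (hU : Uᵀ * U = 1)
    (hι : Fintype.card ι ≤ S.card) :
    trace (Uᵀ * (V * diagonal μ * Vᵀ) * U) ≤ ∑ i ∈ S, μ i := by
  have hVU : (Vᵀ * U)ᵀ * (Vᵀ * U) = 1 := by
    rw [transpose_mul, transpose_transpose, Matrix.mul_assoc, ← Matrix.mul_assoc V, hV,
      Matrix.one_mul, hU]
  simpa only [transpose_mul, transpose_transpose, Matrix.mul_assoc] using
    hS.trace_transpose_mul_diagonal_mul_le hμ hVU hι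

theorem trace_le_of_posSemidef_diagonal_sub (hS : IsTopIndexSet μ S) (hμ : ∀ i, 0 ≤ μ i)
    {Y : Matrix β β ℝ} (hrank : Y.rank ≤ S.card) (hle : (diagonal μ - Y).PosSemidef) :
    trace Y ≤ ∑ i ∈ S, μ i := by
  obtain ⟨k, hk, U, hU, hUY⟩ := exists_orthonormal_mul_transpose_mul_eq Y
  have hgap := (hle.transpose_mul_mul_same U).trace_nonneg
  rw [Matrix.mul_sub, Matrix.sub_mul, trace_sub, sub_nonneg] at hgap
  calc trace Y = trace (Uᵀ * Y * U) := by rw [trace_mul_cycle, hUY]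
    _ ≤ trace (Uᵀ * diagonal μ * U) := hgap
    _ ≤ ∑ i ∈ S, μ i :=
        hS.trace_transpose_mul_diagonal_mul_le hμ hU (by simpa using hk.trans hrank)

theorem trace_transpose_mul_mul_transpose_mul_le [DecidableEq α]
    (hS : IsTopIndexSet μ S) {R : Matrix α β ℝ} (hR : Rᵀ * R = diagonal μ) {U : Matrix α ι ℝ}
    (hU : Uᵀ * U = 1) (hι : Fintype.card ι ≤ S.card) :
    trace (Uᵀ * (R * Rᵀ) * U) ≤ ∑ i ∈ S, μ i := by
  have hμ : ∀ i, 0 ≤ μ i := fun i => by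
    simpa [hR] using (posSemidef_transpose_mul_self R).diag_nonneg (i := i)
  have hrank : (Rᵀ * (U * Uᵀ) * R).rank ≤ S.card := by
    have hY : Rᵀ * (U * Uᵀ) * R = (Uᵀ * R)ᵀ * (Uᵀ * R) := by
      simp only [transpose_mul, transpose_transpose, Matrix.mul_assoc]
    rw [hY, rank_transpose_mul_self]
    exact (rank_le_card_height _).trans hι
  have hle : (diagonal μ - Rᵀ * (U * Uᵀ) * R).PosSemidef := by
    have hgap : diagonal μ - Rᵀ * (U * Uᵀ) * R = Rᵀ * (1 - U * Uᵀ) * R := by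
      rw [Matrix.mul_sub, Matrix.sub_mul, Matrix.mul_one, hR]
    rw [hgap]
    exact (posSemidef_one_sub_mul_transpose hU).transpose_mul_mul_same R
  calc trace (Uᵀ * (R * Rᵀ) * U) = trace (Rᵀ * (U * Uᵀ) * R) := by
        rw [trace_mul_cycle, trace_mul_cycle Rᵀ, trace_mul_comm (R * Rᵀ)]
    _ ≤ ∑ i ∈ S, μ i := hS.trace_le_of_posSemidef_diagonal_sub hμ hrank hle

theorem eckart_young [DecidableEq α] {J : Matrix α β ℝ} (hJ : Jᵀ * J = diagonal μ)
    (hS : IsTopIndexSet μ S) {G : Matrix α α ℝ} (hG : G.rank ≤ S.card) :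
    trace ((J * Jᵀ - J * diagonal (fun i => if i ∈ S then (1 : ℝ) else 0) * Jᵀ)ᵀ *
        (J * Jᵀ - J * diagonal (fun i => if i ∈ S then (1 : ℝ) else 0) * Jᵀ)) ≤
      trace ((J * Jᵀ - G)ᵀ * (J * Jᵀ - G)) := by
  have hμ : ∀ i, 0 ≤ μ i := fun i => by
    simpa [hJ] using (posSemidef_transpose_mul_self J).diag_nonneg (i := i)
  -- `R Rᵀ = (J Jᵀ)²` while `Rᵀ R = diagonal μ²`, so Ky Fan bounds the part of `J Jᵀ` captured
  -- by any projection of rank at most `#S`.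
  set R := J * diagonal fun i => √(μ i) with hRdef
  have hR : Rᵀ * R = diagonal fun i => μ i * μ i := by
    rw [hRdef, transpose_mul, diagonal_transpose, Matrix.mul_assoc, ← Matrix.mul_assoc Jᵀ, hJ,
      diagonal_mul_diagonal, diagonal_mul_diagonal]
    congr 1
    funext i
    linear_combination μ i * Real.mul_self_sqrt (hμ i)
  have hRR : R * Rᵀ = J * Jᵀ * (J * Jᵀ)ᵀ := by
    simp only [hRdef, transpose_mul, transpose_transpose, diagonal_transpose, Matrix.mul_assoc]
    rw [← Matrix.mul_assoc Jᵀ J, hJ, ← Matrix.mul_assoc (diagonal _) (diagonal _),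
      diagonal_mul_diagonal]
    congr 3
    funext i
    exact Real.mul_self_sqrt (hμ i)
  have hlower := trace_sub_le_trace_sub_transpose_mul_sub (J * Jᵀ) G hG fun k _ U hU =>
    hRR ▸ (hS.mul_self hμ).trace_transpose_mul_mul_transpose_mul_le hR hU (by simpa)
  have hfull := trace_conj_diagonal_transpose_mul_self hJ fun _ => 1
  rw [diagonal_one, Matrix.mul_one] at hfull
  have hcompl : diagonal (fun i => if i ∈ S then (0 : ℝ) else 1) =
      1 - diagonal fun i => if i ∈ S then (1 : ℝ) else 0 := by
    rw [← diagonal_one, diagonal_sub]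
    congr 1
    funext i
    split_ifs <;> norm_num
  have hrest : J * Jᵀ - J * diagonal (fun i => if i ∈ S then (1 : ℝ) else 0) * Jᵀ =
      J * diagonal (fun i => if i ∈ S then (0 : ℝ) else 1) * Jᵀ := by
    rw [hcompl, Matrix.mul_sub, Matrix.sub_mul, Matrix.mul_one]
  rw [hrest, trace_conj_diagonal_transpose_mul_self hJ]
  rw [hfull] at hlower
  have hsplit : ∑ i, (1 * μ i) ^ 2 =
      ∑ i, ((if i ∈ S then (0 : ℝ) else 1) * μ i) ^ 2 + ∑ i ∈ S, μ i * μ i := by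
    have hS' := Finset.sum_ite_mem Finset.univ S fun i => μ i * μ i
    rw [Finset.univ_inter] at hS'
    rw [← hS', ← Finset.sum_add_distrib]
    exact Finset.sum_congr rfl fun i _ => by split_ifs <;> ring
  linarith

theorem trace_le_trace_of_mul_transpose_eq {κ : Type*} [Fintype κ] (hS : IsTopIndexSet μ S)
    (hμ : ∀ i, 0 ≤ μ i) {V : Matrix β β ℝ} (hV : Vᵀ * V = 1) (hV' : V * Vᵀ = 1)
    {W : Matrix β κ ℝ} (hW : W * Wᵀ = V * diagonal (fun i => if i ∈ S then (1 : ℝ) else 0) * Vᵀ)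
    {U : Matrix β ι ℝ} (hU : Uᵀ * U = 1) (hι : Fintype.card ι ≤ S.card) :
    trace (Uᵀ * (V * diagonal μ * Vᵀ) * U) ≤ trace (Wᵀ * (V * diagonal μ * Vᵀ) * W) := by
  refine (hS.trace_transpose_mul_conj_diagonal_mul_le hμ hV' hU hι).trans_eq ?_
  rw [trace_mul_cycle, hW, show V * diagonal (fun i => if i ∈ S then (1 : ℝ) else 0) * Vᵀ *
      (V * diagonal μ * Vᵀ) = V * (diagonal (fun i => if i ∈ S then (1 : ℝ) else 0) *
        (Vᵀ * V) * diagonal μ) * Vᵀ by simp only [Matrix.mul_assoc],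
    trace_mul_cycle, hV, Matrix.one_mul, Matrix.mul_one, diagonal_mul_diagonal, trace_diagonal]
  simp [Finset.sum_ite_mem]

end IsTopIndexSet

theorem isLeast_frobNorm_sq_sub_mul {α β γ : Type*} [Fintype α] [Fintype β] [Fintype γ]
    [DecidableEq β] (A : Matrix α γ ℝ) {F : Matrix α β ℝ} (hF : Fᵀ * F = 1) {r : ℕ}
    {W : Matrix β (Fin r) ℝ} (hW : Wᵀ * W = 1)
    (hmax : ∀ k ≤ r, ∀ U : Matrix β (Fin k) ℝ, Uᵀ * U = 1 →
      trace (Uᵀ * (Fᵀ * A * (Fᵀ * A)ᵀ) * U) ≤ trace (Wᵀ * (Fᵀ * A * (Fᵀ * A)ᵀ) * W)) :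
    IsLeast {x | ∃ T : Matrix β γ ℝ, T.rank ≤ r ∧ x = frobNorm (A - F * T) ^ 2}
      (trace (Aᵀ * A) - trace (Wᵀ * (Fᵀ * A * (Fᵀ * A)ᵀ) * W)) := by
  -- Pythagoras: `A - F T` splits into `(1 - F Fᵀ) A` and `F (Fᵀ A - T)`.
  have hsplit : ∀ T : Matrix β γ ℝ, trace ((A - F * T)ᵀ * (A - F * T)) =
      trace (Aᵀ * A) - trace ((Fᵀ * A)ᵀ * (Fᵀ * A)) +
        trace ((Fᵀ * A - T)ᵀ * (Fᵀ * A - T)) := by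
    intro T
    have hT : (F * T)ᵀ * (F * T) = Tᵀ * T := by
      rw [transpose_mul, Matrix.mul_assoc, ← Matrix.mul_assoc Fᵀ, hF, Matrix.one_mul]
    have hAT : Aᵀ * (F * T) = (Fᵀ * A)ᵀ * T := by
      rw [transpose_mul, transpose_transpose, Matrix.mul_assoc]
    rw [trace_sub_transpose_mul_sub, trace_sub_transpose_mul_sub, hT, hAT]
    ring
  refine ⟨⟨W * Wᵀ * (Fᵀ * A), ?_, ?_⟩, ?_⟩
  · exact (rank_mul_le_left _ _).trans ((rank_mul_le_left _ _).trans
      ((rank_le_card_width W).trans (by simp)))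
  · rw [frobNorm_sq, hsplit, trace_sub_transpose_mul_sub, trace_transpose_mul_proj_mul,
      trace_proj_mul_transpose_mul_self hW]
    ring
  · rintro x ⟨T, hT, rfl⟩
    rw [frobNorm_sq, hsplit]
    linarith [trace_sub_le_trace_sub_transpose_mul_sub (Fᵀ * A) T hT hmax]

theorem exists_best_low_rank_approx {α β : Type*} [Fintype α] [Fintype β] [DecidableEq α]
    [DecidableEq β] {A : Matrix α α ℝ} (hA : Aᵀ = A) {F : Matrix α β ℝ} (hF : Fᵀ * F = 1)
    {r : ℕ} (hr : r ≤ Fintype.card β) :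
    ∃ H : Matrix α (Fin r) ℝ, Hᵀ * H = 1 ∧
      (∀ G : Matrix α α ℝ, G.rank ≤ r →
        frobNorm (A * F * (A * F)ᵀ - A * H * Hᵀ * A) ≤ frobNorm (A * F * (A * F)ᵀ - G)) ∧
      IsLeast {x | ∃ T : Matrix β α ℝ, T.rank ≤ r ∧ x = frobNorm (A - F * T) ^ 2}
        (trace (A * A - A * H * Hᵀ * A)) := by
  obtain ⟨ν, V, hν, hV, hV', hBV⟩ :=
    (posSemidef_transpose_mul_self (A * F)).exists_orthogonal_diagonal
  obtain ⟨S, hcard, hS⟩ := exists_isTopIndexSet ν hr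
  obtain ⟨W, hW, hWW⟩ := exists_orthonormal_mul_transpose_eq hV S hcard
  have hFW : (F * W)ᵀ * (F * W) = 1 := by
    rw [transpose_mul, Matrix.mul_assoc, ← Matrix.mul_assoc Fᵀ, hF, Matrix.one_mul, hW]
  refine ⟨F * W, hFW, fun G hG => Real.sqrt_le_sqrt ?_, ?_⟩
  · have hJ : (A * F * V)ᵀ * (A * F * V) = diagonal ν := by
      rw [transpose_mul, Matrix.mul_assoc, ← Matrix.mul_assoc (A * F)ᵀ, hBV]
      simp only [Matrix.mul_assoc]
      rw [hV, Matrix.mul_one, ← Matrix.mul_assoc, hV, Matrix.one_mul]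
    have hgram : A * F * (A * F)ᵀ = A * F * V * (A * F * V)ᵀ := by
      rw [transpose_mul (A * F) V, ← Matrix.mul_assoc, Matrix.mul_assoc (A * F), hV',
        Matrix.mul_one]
    have happrox : A * (F * W) * (F * W)ᵀ * A =
        A * F * V * diagonal (fun i => if i ∈ S then (1 : ℝ) else 0) * (A * F * V)ᵀ := by
      calc A * (F * W) * (F * W)ᵀ * A = A * F * (W * Wᵀ) * (A * F)ᵀ := by
            simp only [transpose_mul, hA, Matrix.mul_assoc]
        _ = _ := by
            rw [hWW]
            simp only [transpose_mul, Matrix.mul_assoc]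
    rw [hgram, happrox]
    exact hS.eckart_young hJ (hcard ▸ hG)
  · have hX : Fᵀ * A * (Fᵀ * A)ᵀ = V * diagonal ν * Vᵀ := by
      rw [← hBV]
      simp only [transpose_mul, transpose_transpose, hA, Matrix.mul_assoc]
    have hleast := isLeast_frobNorm_sq_sub_mul A hF hW fun k hk U hU =>
      hX ▸ hS.trace_le_trace_of_mul_transpose_eq hν hV hV' hWW hU (by simpa [hcard])
    convert hleast using 1
    rw [trace_sub, hA]
    congr 1
    rw [trace_mul_comm, ← Matrix.mul_assoc, ← Matrix.mul_assoc, trace_mul_comm]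
    simp only [transpose_mul, transpose_transpose, hA, Matrix.mul_assoc]

theorem stmt_5_general {n m r : ℕ} (hrm : r ≤ m)
    (K : Matrix (Fin n) (Fin n) ℝ) (hK : K.PosSemidef)
    (P : Matrix (Fin n) (Fin m) ℝ)
    (C : Matrix (Fin n) (Fin m) ℝ) (W : Matrix (Fin m) (Fin m) ℝ)
    (hC : C = K * P) (hW : W = Pᵀ * K * P)
    -- singular value decomposition K^{1/2} P = F S Nᵀ
    (F : Matrix (Fin n) (Fin m) ℝ) (N : Matrix (Fin m) (Fin m) ℝ) (s : Fin m → ℝ)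
    (hF : Fᵀ * F = 1) (hN : Nᵀ * N = 1) (hs : ∀ i, 0 < s i)
    (hSVD : hK.sqrt * P = F * Matrix.diagonal s * Nᵀ) :
    ∃ H : Matrix (Fin n) (Fin r) ℝ, Hᵀ * H = 1 ∧
      (∀ G' : Matrix (Fin n) (Fin n) ℝ, G'.rank ≤ r →
        frobNorm (C * W⁻¹ * Cᵀ - hK.sqrt * H * Hᵀ * hK.sqrt)
          ≤ frobNorm (C * W⁻¹ * Cᵀ - G')) ∧
      (K - hK.sqrt * H * Hᵀ * hK.sqrt).PosSemidef ∧
      IsLeast {x : ℝ | ∃ T : Matrix (Fin m) (Fin n) ℝ, T.rank ≤ r ∧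
          x = frobNorm (hK.sqrt - F * T) ^ 2}
        (Matrix.trace (K - hK.sqrt * H * Hᵀ * hK.sqrt)) := by
  set A := hK.sqrt
  have hAt : Aᵀ = A := hK.transpose_sqrt
  have hAA : A * A = K := hK.sqrt_mul_self
  have hCWC : C * W⁻¹ * Cᵀ = A * F * (A * F)ᵀ := by
    have hproj := mul_inv_gram_mul_transpose_of_svd hF hN fun i => (hs i).ne'
    rw [← hSVD] at hproj
    calc C * W⁻¹ * Cᵀ = A * (A * P * ((A * P)ᵀ * (A * P))⁻¹ * (A * P)ᵀ) * A := by
          rw [hC, hW, ← hAA]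
          simp only [transpose_mul, hAt, Matrix.mul_assoc]
      _ = A * F * (A * F)ᵀ := by
          rw [hproj]
          simp only [transpose_mul, hAt, Matrix.mul_assoc]
  obtain ⟨H, hH, hbest, hleast⟩ := exists_best_low_rank_approx hAt hF (r := r) (by simpa using hrm)
  refine ⟨H, hH, hCWC ▸ hbest, ?_, hAA ▸ hleast⟩
  have hgap : K - A * H * Hᵀ * A = Aᵀ * (1 - H * Hᵀ) * A := by
    rw [hAt, Matrix.mul_sub, Matrix.sub_mul, Matrix.mul_one, hAA]
    simp only [Matrix.mul_assoc]
  rw [hgap]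
  exact (posSemidef_one_sub_mul_transpose hH).transpose_mul_mul_same A

theorem stmt_5 {n m r : ℕ} (hrm : r ≤ m)
    (K : Matrix (Fin n) (Fin n) ℝ) (hK : K.PosSemidef)
    (P : Matrix (Fin n) (Fin m) ℝ)
    (C : Matrix (Fin n) (Fin m) ℝ) (W : Matrix (Fin m) (Fin m) ℝ)
    (hC : C = K * P) (hW : W = Pᵀ * K * P) (hWinv : IsUnit W)
    -- singular value decomposition K^{1/2} P = F S Nᵀ
    (F : Matrix (Fin n) (Fin m) ℝ) (N : Matrix (Fin m) (Fin m) ℝ) (s : Fin m → ℝ)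
    (hF : Fᵀ * F = 1) (hN : Nᵀ * N = 1) (hs : ∀ i, 0 < s i)
    (hSVD : hK.sqrt * P = F * Matrix.diagonal s * Nᵀ) :
    ∃ H : Matrix (Fin n) (Fin r) ℝ, Hᵀ * H = 1 ∧
      (∀ G' : Matrix (Fin n) (Fin n) ℝ, G'.rank ≤ r →
        frobNorm (C * W⁻¹ * Cᵀ - hK.sqrt * H * Hᵀ * hK.sqrt)
          ≤ frobNorm (C * W⁻¹ * Cᵀ - G')) ∧
      (K - hK.sqrt * H * Hᵀ * hK.sqrt).PosSemidef ∧
      IsLeast {x : ℝ | ∃ T : Matrix (Fin m) (Fin n) ℝ, T.rank ≤ r ∧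
          x = frobNorm (hK.sqrt - F * T) ^ 2}
        (Matrix.trace (K - hK.sqrt * H * Hᵀ * hK.sqrt)) :=
  stmt_5_general hrm K hK P C W hC hW F N s hF hN hs hSVD
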